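/- Let (X, ř) be a finite involutive non-degenerate set-theoretic solution, F = Σ_{x,y∈X} e_{x,x} ⊗ e_{σ_x(y),y} and F^op = Σ_{x,y} e_{σ_x(y),y} ⊗ e_{x,x} (flip of tensor factors). Then (F^op)⁻¹ F = Σ_{x,y∈X} e_{y,σ_x(y)} ⊗ e_{x,τ_y(x)} = r, i.e. the twist factorizes the matrix r = Př. -/

import Mathlib

open Matrix

/-- Elementary matrix `e_{x,y}` with a single `1` in entry `(x,y)`. -/
noncomputable def eM {X : Type*} [DecidableEq X] (x y : X) : Matrix X X ℂ :=
  Matrix.single x y 1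

/-- Kronecker (tensor) product of two `X × X` matrices, indexed by `X × X`. -/
def kron2 {X : Type*} (A B : Matrix X X ℂ) : Matrix (X × X) (X × X) ℂ :=
  Matrix.of fun p q => A p.1 q.1 * B p.2 q.2

/-- The linearized set-theoretic solution `ř = Σ_{x,y} e_{x,σ_x(y)} ⊗ e_{y,τ_y(x)}`. -/
noncomputable def rcheckMat {X : Type*} [DecidableEq X] [Fintype X] (σ τ : X → X → X) :
    Matrix (X × X) (X × X) ℂ :=
  ∑ x : X, ∑ y : X, kron2 (eM x (σ x y)) (eM y (τ y x))

/-- The permutation operator `P = Σ_{x,y} e_{x,y} ⊗ e_{y,x}`. -/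
noncomputable def Pmat (X : Type*) [DecidableEq X] [Fintype X] :
    Matrix (X × X) (X × X) ℂ :=
  ∑ x : X, ∑ y : X, kron2 (eM x y) (eM y x)

/-- The set-theoretic map `ř(x,y) = (σ_x(y), τ_y(x))`. -/
def rFun {X : Type*} (σ τ : X → X → X) : X × X → X × X :=
  fun p => (σ p.1 p.2, τ p.2 p.1)

/-- `ř × id` acting on `X × X × X`. -/
def rFun12 {X : Type*} (σ τ : X → X → X) : X × X × X → X × X × X :=
  fun p => (σ p.1 p.2.1, τ p.2.1 p.1, p.2.2)

/-- `id × ř` acting on `X × X × X`. -/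
def rFun23 {X : Type*} (σ τ : X → X → X) : X × X × X → X × X × X :=
  fun p => (p.1, σ p.2.1 p.2.2, τ p.2.2 p.2.1)

/-!
All matrices involved are permutation matrices of bijections of `X × X`: `F` is that of the
shear `S (x, y) = (x, σ_x(y))`, `F^op` that of its conjugate by the flip, and `P`, `ř` those of
the flip and of the set-theoretic solution. The identity therefore reduces to the identity of
permutations `S⁻¹ ∘ flip ∘ S = ř`, i.e. the relation `σ_{σ_x(y)}(τ_y(x)) = x` coming from
involutivity.
-/

open Equiv

section PermMatrix

variable {ι R : Type*} [Fintype ι] [DecidableEq ι]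

lemma sum_single_one_eq_permMatrix [Semiring R] (φ ψ : Perm ι) :
    ∑ k, single (φ k) (ψ k) (1 : R) = (ψ * φ⁻¹).permMatrix R := by
  ext i j
  rw [Matrix.sum_apply, ← φ.symm.sum_comp fun k => single (φ k) (ψ k) (1 : R) i j]
  simp only [apply_symm_apply, single_apply, ite_and, Finset.sum_ite_eq', Finset.mem_univ, if_true]
  simp [PEquiv.toMatrix_apply, eq_comm]

lemma inv_permMatrix [CommRing R] (φ : Perm ι) : (φ.permMatrix R)⁻¹ = φ⁻¹.permMatrix R :=
  Matrix.inv_eq_left_inv <| by rw [← Matrix.permMatrix_mul, mul_inv_cancel, Matrix.permMatrix_one]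

end PermMatrix

lemma prodComm_inv (α : Type*) : (prodComm α α)⁻¹ = prodComm α α :=
  prodComm_symm α α

section Solution

variable {X : Type*} (σ τ : X → X → X)

noncomputable def sigmaShear (hσ : ∀ x, Function.Bijective (σ x)) : Perm (X × X) :=
  prodShear (Equiv.refl X) fun x => ofBijective (σ x) (hσ x)

lemma rFun_involutive (hinv : ∀ x y : X, σ (σ x y) (τ y x) = x ∧ τ (τ y x) (σ x y) = y) :
    Function.Involutive (rFun σ τ) := fun p => by
  simp [rFun, hinv]

noncomputable def rcheckPerm (hinv : ∀ x y : X, σ (σ x y) (τ y x) = x ∧ τ (τ y x) (σ x y) = y) :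
    Perm (X × X) :=
  (rFun_involutive σ τ hinv).toPerm

lemma sigmaShear_inv_mul_prodComm_mul_sigmaShear (hσ : ∀ x, Function.Bijective (σ x))
    (hinv : ∀ x y : X, σ (σ x y) (τ y x) = x ∧ τ (τ y x) (σ x y) = y) :
    (sigmaShear σ hσ)⁻¹ * prodComm X X * sigmaShear σ hσ = rcheckPerm σ τ hinv := by
  rw [mul_assoc, inv_mul_eq_iff_eq_mul]
  ext ⟨x, y⟩ <;> simp [sigmaShear, rcheckPerm, rFun, hinv]

end Solution

section Matrices

variable {X : Type*} [DecidableEq X]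

lemma kron2_eM_eM (a b c d : X) : kron2 (eM a b) (eM c d) = single (a, c) (b, d) 1 := by
  rw [← mul_one (1 : ℂ)]
  exact single_kronecker_single a b c d 1 1

variable [Fintype X] (σ τ : X → X → X)

lemma sum_kron2_eM_eq_permMatrix (φ ψ : Perm (X × X)) :
    ∑ x : X, ∑ y : X, kron2 (eM (φ (x, y)).1 (ψ (x, y)).1) (eM (φ (x, y)).2 (ψ (x, y)).2) =
      (ψ * φ⁻¹).permMatrix ℂ := by
  simp only [kron2_eM_eM]
  rw [← sum_single_one_eq_permMatrix, ← Fintype.sum_prod_type']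

lemma twist_eq_permMatrix (hσ : ∀ x, Function.Bijective (σ x)) :
    ∑ x : X, ∑ y : X, kron2 (eM x x) (eM (σ x y) y) = (sigmaShear σ hσ)⁻¹.permMatrix ℂ := by
  have h := sum_kron2_eM_eq_permMatrix (sigmaShear σ hσ) 1
  rwa [one_mul] at h

lemma twist_flip_eq_permMatrix (hσ : ∀ x, Function.Bijective (σ x)) :
    ∑ x : X, ∑ y : X, kron2 (eM (σ x y) y) (eM x x) =
      Perm.permMatrix ℂ (prodComm X X * (prodComm X X * sigmaShear σ hσ)⁻¹) :=
  sum_kron2_eM_eq_permMatrix (prodComm X X * sigmaShear σ hσ) (prodComm X X)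

lemma Pmat_eq_permMatrix : Pmat X = Perm.permMatrix ℂ (prodComm X X) := by
  have h := sum_kron2_eM_eq_permMatrix (1 : Perm (X × X)) (prodComm X X)
  rwa [inv_one, mul_one] at h

lemma rcheckMat_eq_permMatrix (hinv : ∀ x y : X, σ (σ x y) (τ y x) = x ∧ τ (τ y x) (σ x y) = y) :
    rcheckMat σ τ = (rcheckPerm σ τ hinv).permMatrix ℂ := by
  have h := sum_kron2_eM_eq_permMatrix 1 (rcheckPerm σ τ hinv)
  rwa [inv_one, mul_one] at h

lemma rMatrix_eq_permMatrix (hinv : ∀ x y : X, σ (σ x y) (τ y x) = x ∧ τ (τ y x) (σ x y) = y) :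
    ∑ x : X, ∑ y : X, kron2 (eM y (σ x y)) (eM x (τ y x)) =
      (rcheckPerm σ τ hinv * prodComm X X).permMatrix ℂ := by
  have h := sum_kron2_eM_eq_permMatrix (prodComm X X) (rcheckPerm σ τ hinv)
  rwa [prodComm_inv] at h

end Matrices

theorem twist_factorization_general {X : Type*} [DecidableEq X] [Fintype X] (σ τ : X → X → X)
    (hσ : ∀ x, Function.Bijective (σ x))
    (hinv : ∀ x y : X, σ (σ x y) (τ y x) = x ∧ τ (τ y x) (σ x y) = y) :
    (∑ x : X, ∑ y : X, kron2 (eM (σ x y) y) (eM x x))⁻¹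
        * (∑ x : X, ∑ y : X, kron2 (eM x x) (eM (σ x y) y))
      = ∑ x : X, ∑ y : X, kron2 (eM y (σ x y)) (eM x (τ y x))
    ∧ Pmat X * rcheckMat σ τ
      = ∑ x : X, ∑ y : X, kron2 (eM y (σ x y)) (eM x (τ y x)) := by
  rw [rMatrix_eq_permMatrix σ τ hinv]
  constructor
  · rw [twist_flip_eq_permMatrix σ hσ, twist_eq_permMatrix σ hσ, inv_permMatrix,
      ← Matrix.permMatrix_mul]
    congr 1
    rw [_root_.mul_inv_rev, inv_inv, prodComm_inv, ← mul_assoc, ← mul_assoc,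
      sigmaShear_inv_mul_prodComm_mul_sigmaShear σ τ hσ hinv]
  · rw [Pmat_eq_permMatrix, rcheckMat_eq_permMatrix σ τ hinv, ← Matrix.permMatrix_mul]

/-- The twist factorizes `r = P ř`:
`(F^op)⁻¹ F = Σ_{x,y} e_{y,σ_x(y)} ⊗ e_{x,τ_y(x)} = P ř`, where
`F = Σ_{x,y} e_{x,x} ⊗ e_{σ_x(y),y}` and `F^op` is its flip. -/
theorem twist_factorization {X : Type*} [DecidableEq X] [Fintype X] (σ τ : X → X → X)
    (hσ : ∀ x, Function.Bijective (σ x))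
    (hτ : ∀ y, Function.Bijective (τ y))
    (hinv : ∀ x y : X, σ (σ x y) (τ y x) = x ∧ τ (τ y x) (σ x y) = y) :
    (∑ x : X, ∑ y : X, kron2 (eM (σ x y) y) (eM x x))⁻¹
        * (∑ x : X, ∑ y : X, kron2 (eM x x) (eM (σ x y) y))
      = ∑ x : X, ∑ y : X, kron2 (eM y (σ x y)) (eM x (τ y x))
    ∧ Pmat X * rcheckMat σ τ
      = ∑ x : X, ∑ y : X, kron2 (eM y (σ x y)) (eM x (τ y x)) :=
  twist_factorization_general σ τ hσ hinv
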